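/- arXiv:math/9910081 — 5 statements merged into one kernel-verified Lean document; each statement's English description precedes it below -/
import Mathlib

section
/- Let C be a maximal set of pairwise adjacent k-dimensional subspaces of an n-dimensional vector space V with 1 < k < n-1 (every two distinct members l₁,l₂ of C satisfy dim(l₁∩l₂)=k-1, and C is maximal with this property). If C contains at least two elements, then either there exists a (k+1)-dimensional subspace s such that C is exactly the set of all k-dimensional subspaces contained in s, or there exists a (k-1)-dimensional subspace s such that C is exactly the set of all k-dimensional subspaces containing s. -/
open Module Submodule

theorem maximal_adjacency_set_classification (F V : Type*) [Field F] [AddCommGroup V]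
    [Module F V] [FiniteDimensional F V] (n k : ℕ) (hn : Module.finrank F V = n)
    (hk1 : 1 < k) (hk2 : k < n - 1)
    (C : Set (Submodule F V))
    (hdim : ∀ l ∈ C, Module.finrank F l = k)
    (hadj : ∀ l₁ ∈ C, ∀ l₂ ∈ C, l₁ ≠ l₂ → Module.finrank F ↥(l₁ ⊓ l₂) = k - 1)
    (hmax : ∀ C' : Set (Submodule F V), C ⊆ C' →
      (∀ l ∈ C', Module.finrank F l = k) →
      (∀ l₁ ∈ C', ∀ l₂ ∈ C', l₁ ≠ l₂ → Module.finrank F ↥(l₁ ⊓ l₂) = k - 1) →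
      C' = C)
    (htwo : ∃ l₁ ∈ C, ∃ l₂ ∈ C, l₁ ≠ l₂) :
    (∃ s : Submodule F V, Module.finrank F s = k + 1 ∧
      C = {l : Submodule F V | Module.finrank F l = k ∧ l ≤ s}) ∨
    (∃ s : Submodule F V, Module.finrank F s = k - 1 ∧
      C = {l : Submodule F V | Module.finrank F l = k ∧ s ≤ l}) := by
  obtain ⟨l₁, hl₁, l₂, hl₂, hne⟩ := htwo
  set S := l₁ ⊔ l₂ with hSdef
  set T := l₁ ⊓ l₂ with hTdef
  have hT : Module.finrank F ↥T = k - 1 := hadj l₁ hl₁ l₂ hl₂ hne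
  have hrk := Submodule.finrank_sup_add_finrank_inf_eq l₁ l₂
  rw [hdim l₁ hl₁, hdim l₂ hl₂, ← hSdef, ← hTdef, hT] at hrk
  have hS : Module.finrank F ↥S = k + 1 := by omega
  by_cases hcase : ∀ l ∈ C, l ≤ S
  · left
    refine ⟨S, hS, ?_⟩
    refine (hmax {l : Submodule F V | Module.finrank F l = k ∧ l ≤ S}
      (fun l hl => ⟨hdim l hl, hcase l hl⟩) (fun l hl => hl.1) ?_).symm
    rintro m₁ ⟨hm₁, hm₁S⟩ m₂ ⟨hm₂, hm₂S⟩ hmne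
    have hsup : Module.finrank F ↥(m₁ ⊔ m₂) = k + 1 := by
      have h1 : m₁ < m₁ ⊔ m₂ := lt_of_le_of_ne le_sup_left (fun h => by
        have hle : m₂ ≤ m₁ := by rw [h]; exact le_sup_right
        exact hmne (Submodule.eq_of_le_of_finrank_le hle
          (le_of_eq (hm₁.trans hm₂.symm))).symm)
      have hlt : k < Module.finrank F ↥(m₁ ⊔ m₂) := by
        have := Submodule.finrank_lt_finrank_of_lt h1
        omega
      have hle : Module.finrank F ↥(m₁ ⊔ m₂) ≤ k + 1 := by
        have := Submodule.finrank_mono (sup_le hm₁S hm₂S)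
        omega
      omega
    have := Submodule.finrank_sup_add_finrank_inf_eq m₁ m₂
    rw [hm₁, hm₂, hsup] at this
    omega
  · push_neg at hcase
    obtain ⟨l₃, hl₃C, hl₃S⟩ := hcase
    -- general helper: any m ∈ C not contained in S satisfies S ⊓ m = T
    have hgen : ∀ m ∈ C, ¬ m ≤ S → S ⊓ m = T := by
      intro m hmC hmS
      have hm1 : m ≠ l₁ := fun h => hmS (h ▸ le_sup_left)
      have hm2 : m ≠ l₂ := fun h => hmS (h ▸ le_sup_right)
      have hdm := hdim m hmC
      have hlt : S ⊓ m < m := lt_of_le_of_ne inf_le_right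
          (fun h => hmS (h ▸ inf_le_left))
      have hub : Module.finrank F ↥(S ⊓ m) ≤ k - 1 := by
        have := Submodule.finrank_lt_finrank_of_lt hlt
        omega
      have h1m : Module.finrank F ↥(l₁ ⊓ m) = k - 1 := hadj l₁ hl₁ m hmC (Ne.symm hm1)
      have h2m : Module.finrank F ↥(l₂ ⊓ m) = k - 1 := hadj l₂ hl₂ m hmC (Ne.symm hm2)
      have hle1 : l₁ ⊓ m ≤ S ⊓ m := inf_le_inf_right m le_sup_left
      have hle2 : l₂ ⊓ m ≤ S ⊓ m := inf_le_inf_right m le_sup_right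
      have he1 : l₁ ⊓ m = S ⊓ m := Submodule.eq_of_le_of_finrank_le hle1 (hub.trans h1m.ge)
      have he2 : l₂ ⊓ m = S ⊓ m := Submodule.eq_of_le_of_finrank_le hle2 (hub.trans h2m.ge)
      have hleT : S ⊓ m ≤ T :=
        le_inf (he1 ▸ inf_le_left) (he2 ▸ inf_le_left)
      have hSm : Module.finrank F ↥(S ⊓ m) = k - 1 := by rw [← he1]; exact h1m
      exact Submodule.eq_of_le_of_finrank_le hleT (by rw [hSm, hT])
    have hSl₃ : S ⊓ l₃ = T := hgen l₃ hl₃C hl₃S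
    have hTle : ∀ l ∈ C, T ≤ l := by
      intro l hl
      by_cases hlS : l ≤ S
      · have hlne : l ≠ l₃ := fun h => hl₃S (h ▸ hlS)
        have hll3 : Module.finrank F ↥(l ⊓ l₃) = k - 1 := hadj l hl l₃ hl₃C hlne
        have hle : l ⊓ l₃ ≤ T := hSl₃ ▸ inf_le_inf_right l₃ hlS
        have : l ⊓ l₃ = T := Submodule.eq_of_le_of_finrank_le hle (by rw [hll3, hT])
        exact this ▸ inf_le_left
      · exact (hgen l hl hlS) ▸ inf_le_right
    right
    refine ⟨T, hT, ?_⟩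
    refine (hmax {l : Submodule F V | Module.finrank F l = k ∧ T ≤ l}
      (fun l hl => ⟨hdim l hl, hTle l hl⟩) (fun l hl => hl.1) ?_).symm
    rintro m₁ ⟨hm₁, hm₁T⟩ m₂ ⟨hm₂, hm₂T⟩ hmne
    have hlt : m₁ ⊓ m₂ < m₁ := lt_of_le_of_ne inf_le_left (fun h => by
      have : m₁ ≤ m₂ := h ▸ inf_le_right
      exact hmne (Submodule.eq_of_le_of_finrank_le this (le_of_eq (hm₂.trans hm₁.symm))))
    have h1 : Module.finrank F ↥(m₁ ⊓ m₂) < k := by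
      have := Submodule.finrank_lt_finrank_of_lt hlt; omega
    have h2 : k - 1 ≤ Module.finrank F ↥(m₁ ⊓ m₂) := by
      have := Submodule.finrank_mono (le_inf hm₁T hm₂T); omega
    omega
end

section
/- For a (k+1)-dimensional subspace s of an n-dimensional vector space V with 1 < k < n-1, the set G_k(s) of all k-dimensional subspaces of s is a maximal set of pairwise adjacent k-dimensional subspaces: any two distinct elements of G_k(s) are adjacent, and for any k-dimensional subspace l of V not contained in s there exists a k-dimensional subspace of s not adjacent to l. -/
open Module Submodule

private lemma aux_sup_span {F V : Type*} [Field F] [AddCommGroup V] [Module F V]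
    [FiniteDimensional F V] (x : Submodule F V) (u : V) (hu : u ∉ x) :
    Module.finrank F ↥(x ⊔ Submodule.span F {u}) = Module.finrank F x + 1 := by
  have h0 : u ≠ 0 := fun h => hu (h ▸ x.zero_mem)
  have hinf : x ⊓ Submodule.span F {u} = ⊥ := by
    rw [eq_bot_iff]
    rintro v ⟨hv1, hv2⟩
    obtain ⟨c, rfl⟩ := Submodule.mem_span_singleton.mp hv2
    rcases eq_or_ne c 0 with rfl | hc
    · simp
    · exact absurd ((x.smul_mem_iff hc).mp hv1) hu
  have := Submodule.finrank_sup_add_finrank_inf_eq x (Submodule.span F {u})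
  rw [hinf, finrank_bot, finrank_span_singleton h0] at this
  omega

private lemma aux_between {F V : Type*} [Field F] [AddCommGroup V] [Module F V]
    [FiniteDimensional F V] (m W : Submodule F V) (r : ℕ) (hmW : m ≤ W)
    (h1 : Module.finrank F m ≤ r) (h2 : r ≤ Module.finrank F W) :
    ∃ m₁ : Submodule F V, m ≤ m₁ ∧ m₁ ≤ W ∧ Module.finrank F m₁ = r := by
  induction r with
  | zero => exact ⟨m, le_rfl, hmW, by omega⟩
  | succ r ih =>
    rcases eq_or_lt_of_le h1 with heq | hlt'
    · exact ⟨m, le_rfl, hmW, heq⟩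
    obtain ⟨m₁, hm1, hm2, hm3⟩ := ih (by omega) (by omega)
    have hlt : m₁ < W := lt_of_le_of_ne hm2 (fun h => by rw [h] at hm3; omega)
    obtain ⟨u, huW, hum⟩ := SetLike.exists_of_lt hlt
    refine ⟨m₁ ⊔ Submodule.span F {u}, le_trans hm1 le_sup_left,
      sup_le hm2 ((Submodule.span_singleton_le_iff_mem u W).mpr huW), ?_⟩
    rw [aux_sup_span m₁ u hum, hm3]

theorem grassmannian_of_sup_maximal_adjacency (F V : Type*) [Field F] [AddCommGroup V]
    [Module F V] [FiniteDimensional F V] (n k : ℕ) (hn : Module.finrank F V = n)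
    (hk1 : 1 < k) (hk2 : k < n - 1)
    (s : Submodule F V) (hs : Module.finrank F s = k + 1) :
    (∀ l₁ l₂ : Submodule F V, Module.finrank F l₁ = k → l₁ ≤ s →
      Module.finrank F l₂ = k → l₂ ≤ s → l₁ ≠ l₂ →
      Module.finrank F ↥(l₁ ⊓ l₂) = k - 1) ∧
    (∀ l : Submodule F V, Module.finrank F l = k → ¬ l ≤ s →
      ∃ l' : Submodule F V, Module.finrank F l' = k ∧ l' ≤ s ∧ l ≠ l' ∧
        Module.finrank F ↥(l ⊓ l') ≠ k - 1) := by
  constructor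
  · intro l₁ l₂ h₁ hle₁ h₂ hle₂ hne
    have hlt : l₁ < l₁ ⊔ l₂ := by
      refine lt_of_le_of_ne le_sup_left (fun h => hne ?_)
      exact (Submodule.eq_of_le_of_finrank_eq (h ▸ le_sup_right) (h₂.trans h₁.symm)).symm
    have h3 : Module.finrank F ↥(l₁ ⊔ l₂) ≤ k + 1 :=
      hs ▸ Submodule.finrank_mono (sup_le hle₁ hle₂)
    have h4 : k < Module.finrank F ↥(l₁ ⊔ l₂) :=
      h₁ ▸ Submodule.finrank_lt_finrank_of_lt hlt
    have h5 := Submodule.finrank_sup_add_finrank_inf_eq l₁ l₂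
    rw [h₁, h₂] at h5
    omega
  · intro l hl hls
    set m : Submodule F V := l ⊓ s with hm
    have hmlt : m < l := lt_of_le_of_ne inf_le_left (fun h => hls (h ▸ inf_le_right))
    have hmdim : Module.finrank F m < k := hl ▸ Submodule.finrank_lt_finrank_of_lt hmlt
    -- extend m to m₁ ≤ s with finrank m₁ = k - 1
    obtain ⟨m₁, hmm₁, hm₁s, hm₁dim⟩ := aux_between m s (k - 1) inf_le_right
      (by omega) (by omega)
    -- pick m₀ ≤ m₁ of finrank k - 2
    obtain ⟨m₀, -, hm₀m₁, hm₀dim⟩ := aux_between ⊥ m₁ (k - 2) bot_le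
      (by simp) (by omega)
    -- pick u ∈ s \ m₁
    have hm₁lt : m₁ < s := lt_of_le_of_ne hm₁s (fun h => by rw [h] at hm₁dim; omega)
    obtain ⟨u, hus, hum₁⟩ := SetLike.exists_of_lt hm₁lt
    -- pick w ∈ s \ (m₁ ⊔ span u)
    have hsup1 : Module.finrank F ↥(m₁ ⊔ Submodule.span F {u}) = k := by
      rw [aux_sup_span m₁ u hum₁, hm₁dim]; omega
    have hsup1s : m₁ ⊔ Submodule.span F {u} ≤ s :=
      sup_le hm₁s ((Submodule.span_singleton_le_iff_mem u s).mpr hus)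
    have hsup1lt : m₁ ⊔ Submodule.span F {u} < s :=
      lt_of_le_of_ne hsup1s (fun h => by rw [h] at hsup1; omega)
    obtain ⟨w, hws, hwm⟩ := SetLike.exists_of_lt hsup1lt
    set l' : Submodule F V := m₀ ⊔ Submodule.span F {u} ⊔ Submodule.span F {w} with hl'
    have hwm₀ : w ∉ m₀ ⊔ Submodule.span F {u} := fun h =>
      hwm (sup_le_sup_right hm₀m₁ _ h)
    have hul'₀ : u ∉ m₀ := fun h => hum₁ (hm₀m₁ h)
    have hl'dim : Module.finrank F l' = k := by
      rw [hl', aux_sup_span _ w hwm₀, aux_sup_span m₀ u hul'₀, hm₀dim]; omega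
    have hl's : l' ≤ s := sup_le (sup_le (hm₀m₁.trans hm₁s)
      ((Submodule.span_singleton_le_iff_mem u s).mpr hus))
      ((Submodule.span_singleton_le_iff_mem w s).mpr hws)
    -- l' ⊔ m₁ = m₁ ⊔ span u ⊔ span w, which has finrank k + 1
    have hsupeq : l' ⊔ m₁ = m₁ ⊔ Submodule.span F {u} ⊔ Submodule.span F {w} := by
      rw [hl']
      apply le_antisymm
      · refine sup_le (sup_le (sup_le ?_ ?_) ?_) ?_
        · exact hm₀m₁.trans (le_sup_left.trans le_sup_left)
        · exact le_sup_right.trans le_sup_left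
        · exact le_sup_right
        · exact le_sup_left.trans le_sup_left
      · refine sup_le (sup_le ?_ ?_) ?_
        · exact le_sup_right
        · exact le_trans (le_sup_right.trans le_sup_left) le_sup_left
        · exact le_trans le_sup_right le_sup_left
    have hsup2 : Module.finrank F ↥(l' ⊔ m₁) = k + 1 := by
      rw [hsupeq, aux_sup_span _ w hwm, hsup1]
    -- finrank (l' ⊓ m₁) = k - 2
    have h6 := Submodule.finrank_sup_add_finrank_inf_eq l' m₁
    rw [hsup2, hl'dim, hm₁dim] at h6
    -- l ⊓ l' ≤ l' ⊓ m₁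
    have hle : l ⊓ l' ≤ l' ⊓ m₁ := by
      refine le_inf inf_le_right (le_trans ?_ hmm₁)
      exact le_inf inf_le_left (inf_le_right.trans hl's)
    have h7 : Module.finrank F ↥(l ⊓ l') ≤ Module.finrank F ↥(l' ⊓ m₁) :=
      Submodule.finrank_mono hle
    exact ⟨l', hl'dim, hl's, fun h => hls (h ▸ hl's), by omega⟩
end

section
/- For any coordinate system on an n-dimensional vector space V (i.e., a basis B) and any m-dimensional subspace s ≤ V with m ≤ n, there exists an (n-m)-dimensional coordinate subspace t (spanned by n-m of the basis vectors) such that s ∩ t = {0}. -/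
/-!
The images of the basis vectors span `V ⧸ s`, so some of them, indexed by `I`, form a basis of
the quotient; hence `#I = n - m`. Since the quotient map is injective on `span (B '' I)`,
its kernel `s` meets that span only in `0`.
-/

open Module Set Submodule

section
variable {K V ι : Type*} [DivisionRing K] [AddCommGroup V] [Module K V]

theorem exists_linearIndepOn_span_image_eq_top {v : ι → V} (hv : span K (range v) = ⊤) :
    ∃ J : Set ι, LinearIndepOn K v J ∧ span K (v '' J) = ⊤ := by
  obtain ⟨J, -, -, hspan, hli⟩ :=
    exists_linearIndepOn_extension (linearIndepOn_empty K v) (subset_univ _)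
  refine ⟨J, hli, eq_top_iff.2 ?_⟩
  rw [← hv, ← image_univ]
  exact span_le.2 hspan

theorem LinearIndepOn.ncard_eq_finrank {v : ι → V} {J : Set ι} (hli : LinearIndepOn K v J)
    (hspan : span K (v '' J) = ⊤) : J.ncard = finrank K V := by
  rw [← Nat.card_coe_set_eq,
    finrank_eq_nat_card_basis (Basis.mk hli (by rw [← image_eq_range, hspan]))]

theorem Submodule.disjoint_span_image_of_linearIndepOn_mkQ (s : Submodule K V) {v : ι → V}
    {J : Set ι} (hli : LinearIndepOn K (s.mkQ ∘ v) J) : Disjoint s (span K (v '' J)) := by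
  simpa [image_eq_range] using (range_ker_disjoint (f := s.mkQ) (v := fun j : J ↦ v j) hli).symm

end

theorem coordinate_complement_exists_general (F V : Type*) [Field F] [AddCommGroup V] [Module F V]
    [FiniteDimensional F V] (n m : ℕ) (hn : Module.finrank F V = n)
    (B : Module.Basis (Fin n) F V)
    (s : Submodule F V) (hs : Module.finrank F s = m) :
    ∃ I : Finset (Fin n), I.card = n - m ∧
      s ⊓ Submodule.span F (B '' (I : Set (Fin n))) = ⊥ := by
  have hspan_quot : span F (range (s.mkQ ∘ B)) = ⊤ := by
    rw [range_comp, span_image, B.span_eq, Submodule.map_top, range_mkQ]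
  obtain ⟨J, hli, hspan⟩ := exists_linearIndepOn_span_image_eq_top hspan_quot
  refine ⟨J.toFinite.toFinset, ?_, ?_⟩
  · rw [← ncard_eq_toFinset_card, hli.ncard_eq_finrank hspan, ← hn, ← hs,
      ← s.finrank_quotient_add_finrank]
    omega
  · simpa using (s.disjoint_span_image_of_linearIndepOn_mkQ hli).eq_bot

theorem coordinate_complement_exists (F V : Type*) [Field F] [AddCommGroup V] [Module F V]
    [FiniteDimensional F V] (n m : ℕ) (hn : Module.finrank F V = n) (hm : m ≤ n)
    (B : Module.Basis (Fin n) F V)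
    (s : Submodule F V) (hs : Module.finrank F s = m) :
    ∃ I : Finset (Fin n), I.card = n - m ∧
      s ⊓ Submodule.span F (B '' (I : Set (Fin n))) = ⊥ :=
  coordinate_complement_exists_general F V n m hn B s hs
end

section
/- Let V be an n-dimensional vector space and s an m-dimensional subspace with m ≤ n - k. Then the set X = {l ∈ G_k(V) : dim(l ∩ s) ≥ 1} contains no maximal regular set; i.e., for every basis B of V, some k-dimensional subspace spanned by vectors of B intersects s trivially. -/
/-!
Choose indices `J` such that the images of `B j` (`j ∈ J`) in `V ⧸ s` form a basis of the
quotient; then `|J| = n - m ≥ k`. Any `k` of these indices span a subspace on which the quotient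
map `V → V ⧸ s` is injective, i.e. one meeting its kernel `s` trivially.
-/

open Submodule Module

theorem LinearIndepOn.disjoint_span_image_ker {R M M' ι : Type*} [Ring R] [AddCommGroup M]
    [Module R M] [AddCommGroup M'] [Module R M'] {f : M →ₗ[R] M'} {v : ι → M} {I : Set ι}
    (hI : LinearIndepOn R (f ∘ v) I) : Disjoint (span R (v '' I)) (LinearMap.ker f) := by
  rw [Set.image_eq_range]
  exact Submodule.range_ker_disjoint hI

theorem exists_finset_linearIndepOn_card_eq_finrank {K W ι : Type*} [DivisionRing K]
    [AddCommGroup W] [Module K W] [FiniteDimensional K W] {w : ι → W}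
    (hw : span K (Set.range w) = ⊤) :
    ∃ J : Finset ι, J.card = finrank K W ∧ LinearIndepOn K w J := by
  obtain ⟨b, -, -, hspan, hli⟩ :=
    exists_linearIndepOn_extension (linearIndepOn_empty K w) (Set.empty_subset Set.univ)
  have hb : b.Finite := hli.finite
  refine ⟨hb.toFinset, ?_, by simpa using hli⟩
  have : Fintype b := hb.fintype
  let basis := Basis.mk hli (by
    rw [← hw, ← Set.image_univ, ← Set.image_eq_range]; exact span_le.mpr hspan)
  rw [finrank_eq_card_basis basis, Set.Finite.card_toFinset]

theorem no_maximal_regular_in_X_general (F V : Type*) [Field F] [AddCommGroup V] [Module F V]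
    [FiniteDimensional F V] (n m k : ℕ) (hn : Module.finrank F V = n)
    (hk2 : k ≤ n - 1)
    (s : Submodule F V) (hs : Module.finrank F s = m) (hm : m ≤ n - k) :
    ∀ B : Module.Basis (Fin n) F V, ∃ I : Finset (Fin n), I.card = k ∧
      Submodule.span F (B '' (I : Set (Fin n))) ⊓ s = ⊥ := by
  intro B
  have hspan : span F (Set.range (s.mkQ ∘ B)) = ⊤ := by
    rw [Set.range_comp, span_image, B.span_eq, Submodule.map_top, range_mkQ]
  obtain ⟨J, hJcard, hJ⟩ := exists_finset_linearIndepOn_card_eq_finrank hspan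
  have hdim : finrank F (V ⧸ s) + m = n := hn ▸ hs ▸ s.finrank_quotient_add_finrank
  obtain ⟨I, hIJ, hIcard⟩ := Finset.exists_subset_card_eq (show k ≤ J.card by omega)
  refine ⟨I, hIcard, disjoint_iff.mp ?_⟩
  simpa only [ker_mkQ] using (hJ.mono (Finset.coe_subset.mpr hIJ)).disjoint_span_image_ker

theorem no_maximal_regular_in_X (F V : Type*) [Field F] [AddCommGroup V] [Module F V]
    [FiniteDimensional F V] (n m k : ℕ) (hn : Module.finrank F V = n)
    (hk1 : 1 ≤ k) (hk2 : k ≤ n - 1)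
    (s : Submodule F V) (hs : Module.finrank F s = m) (hm : m ≤ n - k) :
    ∀ B : Module.Basis (Fin n) F V, ∃ I : Finset (Fin n), I.card = k ∧
      Submodule.span F (B '' (I : Set (Fin n))) ⊓ s = ⊥ :=
  no_maximal_regular_in_X_general F V n m k hn hk2 s hs hm
end

section
/- For natural numbers n, k with 1 < k < n-1 and n - k ≤ k, the binomial coefficients satisfy C(n-1, k-1) ≥ C(n-1, k), with equality if and only if n = 2k; moreover if n - k < k < n - 1 then C(n-1,k-1) - C(n-1,k) > C(k-1, 2k-n-1). -/
lemma choose_lt_choose_top {t s u : ℕ} (ht : 1 ≤ t) (hts : t ≤ s) (hsu : s < u) :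
    Nat.choose s t < Nat.choose u t := by
  obtain ⟨t', rfl⟩ : ∃ t', t = t' + 1 := ⟨t - 1, by omega⟩
  have hss : Nat.choose (s + 1) (t' + 1) = Nat.choose s t' + Nat.choose s (t' + 1) :=
    Nat.choose_succ_succ s t'
  have hp : 0 < Nat.choose s t' := Nat.choose_pos (by omega)
  calc Nat.choose s (t' + 1) < Nat.choose (s + 1) (t' + 1) := by omega
    _ ≤ Nat.choose u (t' + 1) := Nat.choose_le_choose _ (by omega)

theorem binomial_inequalities (n k : ℕ) (h1 : 1 < k) (h2 : k < n - 1) (h3 : n - k ≤ k) :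
    (Nat.choose (n - 1) k ≤ Nat.choose (n - 1) (k - 1)) ∧
    (Nat.choose (n - 1) (k - 1) = Nat.choose (n - 1) k ↔ n = 2 * k) ∧
    (n - k < k →
      Nat.choose (k - 1) (2 * k - n - 1) <
        Nat.choose (n - 1) (k - 1) - Nat.choose (n - 1) k) := by
  obtain ⟨c, rfl⟩ : ∃ c, k = c + 2 := ⟨k - 2, by omega⟩
  obtain ⟨a, rfl⟩ : ∃ a, n = c + 4 + a := ⟨n - (c + 4), by omega⟩
  have ha : a ≤ c := by omega
  have hn1 : c + 4 + a - 1 = c + 3 + a := by omega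
  have hk1 : c + 2 - 1 = c + 1 := by omega
  rw [hn1, hk1]
  have key : Nat.choose (c + 3 + a) (c + 2) * (c + 2)
      = Nat.choose (c + 3 + a) (c + 1) * (a + 2) := by
    have := Nat.choose_succ_right_eq (c + 3 + a) (c + 1)
    simpa [show c + 3 + a - (c + 1) = a + 2 by omega] using this
  have hpos : 0 < Nat.choose (c + 3 + a) (c + 1) := Nat.choose_pos (by omega)
  have part1 : Nat.choose (c + 3 + a) (c + 2) ≤ Nat.choose (c + 3 + a) (c + 1) := by
    have h : Nat.choose (c + 3 + a) (c + 2) * (c + 2)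
        ≤ Nat.choose (c + 3 + a) (c + 1) * (c + 2) := by
      rw [key]; exact Nat.mul_le_mul_left _ (by omega)
    exact Nat.le_of_mul_le_mul_right h (by omega)
  refine ⟨part1, ⟨fun heq => ?_, fun heq => ?_⟩, fun hlt => ?_⟩
  · -- equality implies n = 2k
    rw [← heq] at key
    have := Nat.eq_of_mul_eq_mul_left hpos key
    omega
  · -- n = 2k implies equality
    have hac : a = c := by omega
    subst hac
    have := Nat.choose_symm (n := 2 * a + 3) (k := a + 2) (by omega)
    simpa [show 2*a+3 - (a+2) = a+1 by omega, show a + 3 + a = 2*a+3 by ring] using this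
  · -- strict inequality
    obtain ⟨b, rfl⟩ : ∃ b, c = a + 1 + b := ⟨c - a - 1, by omega⟩
    rw [show 2 * (a + 1 + b + 2) - (a + 1 + b + 4 + a) - 1 = b by omega,
      show a + 1 + b + 3 + a = 2 * a + b + 4 by ring,
      show a + 1 + b + 1 = a + b + 2 by ring,
      show a + 1 + b + 2 = a + b + 3 by ring]
    rw [show a + 1 + b + 3 + a = 2 * a + b + 4 by ring,
      show a + 1 + b + 1 = a + b + 2 by ring,
      show a + 1 + b + 2 = a + b + 3 by ring] at key
    -- key : choose (2a+b+4) (a+b+3) * (a+b+3) = choose (2a+b+4) (a+b+2) * (a+2)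
    set X := Nat.choose (2 * a + b + 4) (a + b + 2) with hX
    set Y := Nat.choose (2 * a + b + 4) (a + b + 3) with hY
    set Z := Nat.choose (a + b + 2) b with hZ
    set W := Nat.choose (a + b + 3) (b + 1) with hW'
    have habs : (a + b + 3) * Z = W * (b + 1) := by
      have := Nat.add_one_mul_choose_eq (a + b + 2) b
      simpa using this
    have hW : W < X := by
      have e1 : W = Nat.choose (a + b + 3) (a + 2) := by
        have := Nat.choose_symm (n := a + b + 3) (k := a + 2) (by omega)
        simpa [hW', show a + b + 3 - (a + 2) = b + 1 by omega] using this
      have e2 : X = Nat.choose (2 * a + b + 4) (a + 2) := by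
        have := Nat.choose_symm (n := 2 * a + b + 4) (k := a + 2) (by omega)
        simpa [hX, show 2 * a + b + 4 - (a + 2) = a + b + 2 by omega] using this
      rw [e1, e2]
      exact choose_lt_choose_top (by omega) (by omega) (by omega)
    have hYX : Y ≤ X := by
      have : Y * (a + b + 3) ≤ X * (a + b + 3) := by
        rw [key]; exact Nat.mul_le_mul_left _ (by omega)
      exact Nat.le_of_mul_le_mul_right this (by omega)
    have hfin : Z * (a + b + 3) < (X - Y) * (a + b + 3) := by
      have hsub : (X - Y) * (a + b + 3) = X * (a + b + 3) - Y * (a + b + 3) :=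
        Nat.sub_mul X Y (a + b + 3)
      have h6 : X * (a + b + 3) - Y * (a + b + 3) = X * (b + 1) := by
        rw [key]; ring_nf; omega
      rw [hsub, h6]
      calc Z * (a + b + 3) = W * (b + 1) := by rw [← habs]; ring
        _ < X * (b + 1) := (Nat.mul_lt_mul_right (by omega)).mpr hW
    exact Nat.lt_of_mul_lt_mul_right hfin
end
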